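/- Fix y ∈ ℝ, τ ∈ (0,1) and ν > 0, and define Ψ₀(m) = ∫ [ (1/2)|y − η| + (τ − 1/2)(y − η) ] φ(η; m, ν²) dη. Then for every m ∈ ℝ, the derivative of Ψ₀ with respect to m equals 1 − τ − Φ(y; m, ν²). -/

import Mathlib

open MeasureTheory Real Filter

/-- Gaussian density with mean `m` and variance `ν ^ 2`, evaluated at `x`:
`φ(x; m, ν²) = (2πν²)^{-1/2} exp(−(x−m)²/(2ν²))`. -/
noncomputable def gpdf (m ν x : ℝ) : ℝ :=
  (Real.sqrt (2 * Real.pi * ν ^ 2))⁻¹ * Real.exp (-((x - m) ^ 2) / (2 * ν ^ 2))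

/-- Gaussian cumulative distribution function with mean `m` and variance `ν ^ 2`:
`Φ(c; m, ν²) = ∫_{−∞}^{c} φ(η; m, ν²) dη`. -/
noncomputable def gcdf (m ν c : ℝ) : ℝ := ∫ x in Set.Iio c, gpdf m ν x

/-!
Substituting `η = m + u` turns the integral into `G (y - m)`, where
`G x = ∫ ρ_τ (x - u) φ(u; 0, ν²) du` is the convolution of the Lipschitz pinball loss `ρ_τ`
with a density of finite first moment. Such a convolution may be differentiated under the
integral sign (Rademacher's theorem makes `ρ_τ (x - u)` differentiable for a.e. `u`), and
`ρ_τ' = τ - 1 + 𝟙_{t > 0}` away from `0`, so `G' x = τ - 1 + Φ(x; 0, ν²)`. The chain rule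
through `m ↦ y - m` flips the sign, and `Φ(y - m; 0, ν²) = Φ(y; m, ν²)`.
-/

section LipschitzConvolution

variable {f g : ℝ → ℝ} {K : NNReal}

theorem LipschitzWith.integrable_comp_sub_mul (hf : LipschitzWith K f) (hg : Integrable g)
    (hg₁ : Integrable fun u => u * g u) (c : ℝ) : Integrable fun u => f (c - u) * g u := by
  refine ((hg.norm.const_mul |f c|).add (hg₁.norm.const_mul K)).mono'
    ((hf.continuous.comp (continuous_sub_left c)).aestronglyMeasurable.mul
      hg.aestronglyMeasurable) (ae_of_all _ fun u => ?_)
  have hfu : |f (c - u)| ≤ |f c| + K * |u| := by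
    have h := hf.dist_le_mul (c - u) c
    rw [Real.dist_eq, Real.dist_eq, sub_sub_cancel_left, abs_neg] at h
    linarith [abs_sub_abs_le_abs_sub (f (c - u)) (f c)]
  simp only [Pi.add_apply, norm_mul, Real.norm_eq_abs]
  nlinarith [abs_nonneg (g u)]

theorem LipschitzWith.hasDerivAt_integral_comp_sub_mul (hf : LipschitzWith K f)
    (hg : Integrable g) (hg₁ : Integrable fun u => u * g u) (c : ℝ) :
    HasDerivAt (fun x => ∫ u, f (x - u) * g u) (∫ u, deriv f (c - u) * g u) c := by
  have hdiff : ∀ᵐ u, DifferentiableAt ℝ f (c - u) :=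
    (quasiMeasurePreserving_sub_left_of_right_invariant volume c).ae
      hf.ae_differentiableAt_real
  have hlip : ∀ u, LipschitzWith (Real.nnabs (K * |g u|)) fun x => f (x - u) * g u := by
    intro u
    refine LipschitzWith.of_dist_le_mul fun a b => ?_
    have h := hf.dist_le_mul (a - u) (b - u)
    rw [Real.dist_eq, Real.dist_eq, sub_sub_sub_cancel_right] at h
    rw [Real.dist_eq, Real.dist_eq, ← sub_mul, abs_mul, Real.coe_nnabs,
      abs_of_nonneg (show 0 ≤ (K : ℝ) * |g u| by positivity)]
    nlinarith [abs_nonneg (g u)]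
  refine (hasDerivAt_integral_of_dominated_loc_of_lip
    (F := fun x u => f (x - u) * g u) (bound := fun u => K * |g u|) (Metric.ball_mem_nhds c one_pos)
    (Eventually.of_forall fun x =>
      (hf.continuous.comp (continuous_sub_left x)).aestronglyMeasurable.mul
        hg.aestronglyMeasurable)
    (hf.integrable_comp_sub_mul hg hg₁ c)
    (((measurable_deriv f).comp (measurable_const.sub measurable_id)).aestronglyMeasurable.mul
      hg.aestronglyMeasurable)
    (ae_of_all _ fun u => (hlip u).lipschitzOnWith) (hg.abs.const_mul K) ?_).2
  filter_upwards [hdiff] with u hu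
  simpa using (hu.hasDerivAt.comp c ((hasDerivAt_id c).sub_const u)).mul_const (g u)

end LipschitzConvolution

section Pinball

/-- The pinball loss: `τ t` for `t ≥ 0` and `(τ - 1) t` for `t ≤ 0`. -/
noncomputable def pinball (τ t : ℝ) : ℝ := 1 / 2 * |t| + (τ - 1 / 2) * t

variable {τ t : ℝ}

theorem lipschitzWith_pinball (τ : ℝ) :
    LipschitzWith (‖(1 / 2 : ℝ)‖₊ + ‖τ - 1 / 2‖₊) (pinball τ) := by
  have h := ((lipschitzWith_smul (1 / 2 : ℝ)).comp lipschitzWith_one_norm).add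
    (lipschitzWith_smul (τ - 1 / 2))
  rwa [mul_one] at h

theorem hasDerivAt_pinball_of_pos (ht : 0 < t) : HasDerivAt (pinball τ) τ t :=
  (((hasDerivAt_abs_pos ht).const_mul (1 / 2)).add
    ((hasDerivAt_id t).const_mul (τ - 1 / 2))).congr_deriv (by ring)

theorem hasDerivAt_pinball_of_neg (ht : t < 0) : HasDerivAt (pinball τ) (τ - 1) t :=
  (((hasDerivAt_abs_neg ht).const_mul (1 / 2)).add
    ((hasDerivAt_id t).const_mul (τ - 1 / 2))).congr_deriv (by ring)

theorem integral_deriv_pinball_comp_sub_mul {g : ℝ → ℝ} (hg : Integrable g) (c : ℝ) :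
    ∫ u, deriv (pinball τ) (c - u) * g u =
      (τ - 1) * (∫ u, g u) + ∫ u in Set.Iio c, g u := by
  have hae : (fun u => deriv (pinball τ) (c - u) * g u)
      =ᵐ[volume] fun u => (τ - 1) * g u + (Set.Iio c).indicator g u := by
    filter_upwards [Measure.ae_ne volume c] with u hu
    rcases hu.lt_or_gt with hlt | hgt
    · rw [(hasDerivAt_pinball_of_pos (sub_pos.2 hlt)).deriv,
        Set.indicator_of_mem (Set.mem_Iio.2 hlt)]
      ring
    · rw [(hasDerivAt_pinball_of_neg (sub_neg.2 hgt)).deriv,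
        Set.indicator_of_notMem (Set.notMem_Iio.2 hgt.le), add_zero]
  rw [integral_congr_ae hae, integral_add (hg.const_mul _) (hg.indicator measurableSet_Iio),
    integral_const_mul, integral_indicator measurableSet_Iio]

end Pinball

theorem integrable_gpdf (m ν : ℝ) : Integrable (gpdf m ν) :=
  ProbabilityTheory.integrable_gaussianPDFReal m ⟨ν ^ 2, sq_nonneg ν⟩

theorem integral_gpdf (m : ℝ) {ν : ℝ} (hν : ν ≠ 0) : ∫ x, gpdf m ν x = 1 :=
  ProbabilityTheory.integral_gaussianPDFReal_eq_one (v := ⟨ν ^ 2, sq_nonneg ν⟩) m fun h =>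
    hν (pow_eq_zero_iff two_ne_zero |>.1 (congrArg NNReal.toReal h :))

theorem gpdf_eq_gpdf_zero_sub (m ν x : ℝ) : gpdf m ν x = gpdf 0 ν (x - m) := by
  simp [gpdf]

theorem integrable_mul_gpdf_zero {ν : ℝ} (hν : ν ≠ 0) : Integrable fun x => x * gpdf 0 ν x := by
  refine ((integrable_mul_exp_neg_mul_sq (b := (2 * ν ^ 2)⁻¹) (by positivity)).const_mul
    (√(2 * π * ν ^ 2))⁻¹).congr (ae_of_all _ fun x => ?_)
  simp only [gpdf, sub_zero]
  rw [neg_div, div_eq_inv_mul, neg_mul]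
  ring

theorem integral_mul_gpdf (h : ℝ → ℝ) (m ν : ℝ) :
    ∫ x, h x * gpdf m ν x = ∫ u, h (m + u) * gpdf 0 ν u := by
  rw [← integral_add_left_eq_self _ m]
  simp [gpdf_eq_gpdf_zero_sub m ν (m + _)]

theorem gcdf_eq_gcdf_zero_sub (m ν c : ℝ) : gcdf m ν c = gcdf 0 ν (c - m) := by
  have h := (measurePreserving_sub_right volume m).setIntegral_preimage_emb
    (measurableEmbedding_subRight m) (gpdf 0 ν) (Set.Iio (c - m))
  rw [Set.preimage_sub_const_Iio, sub_add_cancel] at h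
  simp only [gcdf, gpdf_eq_gpdf_zero_sub m ν, h]

theorem quantile_Psi1_general (y τ ν : ℝ) (hν : 0 < ν) (m : ℝ) :
    HasDerivAt (fun m' => ∫ η, ((1 / 2) * |y - η| + (τ - 1 / 2) * (y - η)) * gpdf m' ν η)
      (1 - τ - gcdf m ν y) m := by
  have hΨ : (fun m' => ∫ η, ((1 / 2) * |y - η| + (τ - 1 / 2) * (y - η)) * gpdf m' ν η)
      = fun m' => ∫ u, pinball τ (y - m' - u) * gpdf 0 ν u :=
    funext fun m' => (integral_mul_gpdf (fun η => pinball τ (y - η)) m' ν).trans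
      (by simp only [sub_add_eq_sub_sub])
  have hG := (lipschitzWith_pinball τ).hasDerivAt_integral_comp_sub_mul (integrable_gpdf 0 ν)
    (integrable_mul_gpdf_zero hν.ne') (y - m)
  rw [integral_deriv_pinball_comp_sub_mul (integrable_gpdf 0 ν), integral_gpdf 0 hν.ne'] at hG
  rw [hΨ, gcdf_eq_gcdf_zero_sub]
  exact (hG.comp m ((hasDerivAt_id m).const_sub y)).congr_deriv (by rw [gcdf]; ring)

theorem quantile_Psi1 (y τ ν : ℝ) (hτ : τ ∈ Set.Ioo (0 : ℝ) 1) (hν : 0 < ν) (m : ℝ) :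
    HasDerivAt (fun m' => ∫ η, ((1 / 2) * |y - η| + (τ - 1 / 2) * (y - η)) * gpdf m' ν η)
      (1 - τ - gcdf m ν y) m :=
  quantile_Psi1_general y τ ν hν m
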